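/- Let A be a strongly-fibred attractor of the IFS F with basin B(A), let x_0 ∈ B(A) and let σ ∈ Σ^∞ be disjunctive. Then C_∞(x_0,σ) = A; that is, the tails {x_n : n ≥ p} of the chaos game orbit converge to A in the Hausdorff metric as p → ∞, and A = ⋂_{p≥1} closure({x_n : n ≥ p}). -/

import Mathlib

open Metric Filter Set MeasureTheory

variable {X : Type*} [MetricSpace X] [CompleteSpace X]
variable {Λ : Type*} [Fintype Λ] [Nonempty Λ]

/-- The Hutchinson operator of the IFS given by the maps `f a`, `a : Λ`. -/
def Hutch (f : Λ → X → X) (B : Set X) : Set X := ⋃ a : Λ, f a '' B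

/-- `A` attracts, under iteration of the Hutchinson operator, every nonempty
compact subset of `U`, in the Hausdorff metric. -/
def Attracts (f : Λ → X → X) (A U : Set X) : Prop :=
  ∀ B : Set X, B.Nonempty → IsCompact B → B ⊆ U →
    Tendsto (fun k : ℕ => hausdorffDist ((Hutch f)^[k] B) A) atTop (nhds 0)

/-- `A` is an attractor of the IFS `f`: a nonempty compact set admitting an open
neighbourhood `U ⊇ A` all of whose nonempty compact subsets are attracted to `A`. -/
def IsAttractor (f : Λ → X → X) (A : Set X) : Prop :=
  A.Nonempty ∧ IsCompact A ∧ ∃ U : Set X, IsOpen U ∧ A ⊆ U ∧ Attracts f A U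

/-- The basin of the attractor `A`: the union of all open `U ⊇ A` from which `A` attracts. -/
def basin (f : Λ → X → X) (A : Set X) : Set X :=
  ⋃₀ {U : Set X | IsOpen U ∧ A ⊆ U ∧ Attracts f A U}

/-- The chaos game orbit of `x₀` driven by the sequence `σ` (0-indexed: `σ 0` acts first). -/
def orbit (f : Λ → X → X) (σ : ℕ → Λ) (x₀ : X) : ℕ → X
  | 0 => x₀
  | k + 1 => f (σ k) (orbit f σ x₀ k)

/-- `C_K(x₀,σ)`: the closure of the tail `{x_k : k ≥ K}` of the chaos game orbit. -/
def tailSet (f : Λ → X → X) (σ : ℕ → Λ) (x₀ : X) (K : ℕ) : Set X :=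
  closure {y : X | ∃ k : ℕ, K ≤ k ∧ orbit f σ x₀ k = y}

/-- `C_∞(x₀,σ) = ⋂_K C_K(x₀,σ)`. -/
def Cinf (f : Λ → X → X) (σ : ℕ → Λ) (x₀ : X) : Set X :=
  ⋂ K : ℕ, tailSet f σ x₀ K

/-- For a word `w = (σ₁, …, σ_m)`, `wordApply f w = f_{σ_m} ∘ ⋯ ∘ f_{σ_1}`
(the letter `w 0` acts first). -/
def wordApply (f : Λ → X → X) {m : ℕ} (w : Fin m → Λ) (x : X) : X :=
  (List.ofFn w).foldl (fun y a => f a y) x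

/-- A sequence of symbols is disjunctive if it contains every finite word
as a block of consecutive letters. -/
def Disjunctive {Γ : Type*} (σ : ℕ → Γ) : Prop :=
  ∀ (m : ℕ) (w : Fin m → Γ), ∃ j : ℕ, ∀ l : Fin m, σ (j + l.1) = w l

/-- `fibreComp f ρ K = f_{ρ_1} ∘ f_{ρ_2} ∘ ⋯ ∘ f_{ρ_K}` (0-indexed: `f (ρ 0) ∘ ⋯ ∘ f (ρ (K-1))`). -/
def fibreComp (f : Λ → X → X) (ρ : ℕ → Λ) : ℕ → X → X
  | 0 => id
  | K + 1 => fibreComp f ρ K ∘ f (ρ K)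

/-- The fibre `A_ρ = ⋂_{K ≥ 1} f_{ρ_1} ∘ ⋯ ∘ f_{ρ_K}(A)` of the attractor `A`. -/
def fibre (f : Λ → X → X) (A : Set X) (ρ : ℕ → Λ) : Set X :=
  ⋂ K : ℕ, fibreComp f ρ (K + 1) '' A

/-- `A` is strongly fibred: every open set meeting `A` contains a fibre. -/
def StronglyFibred (f : Λ → X → X) (A : Set X) : Prop :=
  ∀ U : Set X, IsOpen U → (U ∩ A).Nonempty → ∃ ρ : ℕ → Λ, fibre f A ρ ⊆ U

/-! The orbit lies in `F^k {x₀}`, which converges to `A`, so the orbit approaches `A`.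
Conversely, let `U` be open and meet `A`. Strong fibredness gives a fibre `A_ρ ⊆ U`, and by
compactness a finite composition `g = f_{ρ_1} ∘ ⋯ ∘ f_{ρ_K}` already maps `A`, hence a
neighbourhood of `A`, into `U`. Once the orbit has entered that neighbourhood, a later occurrence
of the reversed word `ρ_K ⋯ ρ_1` in the disjunctive sequence `σ` applies `g` to the orbit and
lands it in `U`. Hence every tail of the orbit is dense in `A` and eventually close to `A`. -/

section HausdorffConvergence

variable {X : Type*} [PseudoMetricSpace X] {S : ℕ → Set X} {A : Set X}

theorem tendsto_infDist_of_tendsto_hausdorffDist (hfin : ∀ k, hausdorffEDist (S k) A ≠ ⊤)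
    (hlim : Tendsto (fun k => hausdorffDist (S k) A) atTop (nhds 0)) {y : ℕ → X}
    (hy : ∀ k, y k ∈ S k) : Tendsto (fun k => infDist (y k) A) atTop (nhds 0) :=
  squeeze_zero (fun _ => infDist_nonneg)
    (fun k => infDist_le_hausdorffDist_of_mem (hy k) (hfin k)) hlim

theorem mem_of_tendsto_of_tendsto_hausdorffDist (hA : IsClosed A)
    (hfin : ∀ k, hausdorffEDist (S k) A ≠ ⊤)
    (hlim : Tendsto (fun k => hausdorffDist (S k) A) atTop (nhds 0)) {y : ℕ → X}
    (hy : ∀ k, y k ∈ S k) {x : X} (hyx : Tendsto y atTop (nhds x)) : x ∈ A := by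
  have hA' : A.Nonempty := nonempty_of_hausdorffEDist_ne_top ⟨_, hy 0⟩ (hfin 0)
  refine (hA.mem_iff_infDist_zero hA').2 (tendsto_nhds_unique ?_
    (tendsto_infDist_of_tendsto_hausdorffDist hfin hlim hy))
  exact ((continuous_infDist_pt A).tendsto x).comp hyx

theorem exists_tendsto_of_tendsto_hausdorffDist (hfin : ∀ k, hausdorffEDist (S k) A ≠ ⊤)
    (hlim : Tendsto (fun k => hausdorffDist (S k) A) atTop (nhds 0)) {x : X} (hx : x ∈ A) :
    ∃ z : ℕ → X, (∀ k, z k ∈ S k) ∧ Tendsto z atTop (nhds x) := by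
  have hclose : ∀ k : ℕ, ∃ z ∈ S k, dist z x < hausdorffDist (S k) A + 1 / (k + 1) :=
    fun k => exists_dist_lt_of_hausdorffDist_lt' hx (lt_add_of_pos_right _ Nat.one_div_pos_of_nat)
      (hfin k)
  choose z hzS hzx using hclose
  refine ⟨z, hzS, tendsto_iff_dist_tendsto_zero.2 <|
    squeeze_zero (fun _ => dist_nonneg) (fun k => (hzx k).le) ?_⟩
  simpa using hlim.add tendsto_one_div_add_atTop_nhds_zero_nat

theorem tendsto_hausdorffDist_of_forall_infDist_le {ι : Type*} {l : Filter ι} {T : ι → Set X}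
    (hA : ∀ i, A ⊆ T i) (hT : ∀ ε > 0, ∀ᶠ i in l, ∀ y ∈ T i, infDist y A ≤ ε) :
    Tendsto (fun i => hausdorffDist (T i) A) l (nhds 0) := by
  refine tendsto_order.2 ⟨fun a ha => Eventually.of_forall fun i => ha.trans_le
    hausdorffDist_nonneg, fun ε hε => ?_⟩
  filter_upwards [hT (ε / 2) (half_pos hε)] with i hi
  refine (hausdorffDist_le_of_infDist (half_pos hε).le hi fun x hx => ?_).trans_lt
    (half_lt_self hε)
  rw [infDist_zero_of_mem (hA i hx)]
  exact (half_pos hε).le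

end HausdorffConvergence

section Symbolic

variable {X : Type*} {Λ : Type*} {f : Λ → X → X}

theorem mem_hutch {B : Set X} (a : Λ) {x : X} (hx : x ∈ B) : f a x ∈ Hutch f B :=
  mem_iUnion_of_mem a (mem_image_of_mem _ hx)

theorem nonempty_iterate_hutch [Nonempty Λ] {B : Set X} (hB : B.Nonempty) (k : ℕ) :
    ((Hutch f)^[k] B).Nonempty := by
  induction k with
  | zero => exact hB
  | succ k ih =>
    rw [Function.iterate_succ_apply']
    obtain ⟨x, hx⟩ := ih
    exact ⟨_, mem_hutch (Classical.arbitrary Λ) hx⟩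

theorem orbit_mem_iterate_hutch (σ : ℕ → Λ) (x₀ : X) (k : ℕ) :
    orbit f σ x₀ k ∈ (Hutch f)^[k] {x₀} := by
  induction k with
  | zero => rfl
  | succ k ih =>
    rw [Function.iterate_succ_apply']
    exact mem_hutch (σ k) ih

theorem antitone_image_fibreComp {A : Set X} (hA : Hutch f A ⊆ A) (ρ : ℕ → Λ) :
    Antitone fun K => fibreComp f ρ K '' A := by
  refine antitone_nat_of_succ_le fun K => ?_
  rw [fibreComp, image_comp]
  exact image_mono ((subset_iUnion (fun a => f a '' A) (ρ K)).trans hA)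

theorem orbit_add_eq_fibreComp (σ ρ : ℕ → Λ) (x₀ : X) (K : ℕ) :
    ∀ j, (∀ i < K, σ (j + i) = ρ (K - 1 - i)) →
      orbit f σ x₀ (j + K) = fibreComp f ρ K (orbit f σ x₀ j) := by
  induction K with
  | zero => exact fun _ _ => rfl
  | succ K ih =>
    intro j hj
    have hfirst : σ j = ρ K := by simpa using hj 0 K.succ_pos
    have hrest : ∀ i < K, σ (j + 1 + i) = ρ (K - 1 - i) := fun i hi => by
      rw [add_assoc, add_comm 1 i, hj (i + 1) (by omega)]
      congr 1
      omega
    rw [show j + (K + 1) = j + 1 + K by omega, ih (j + 1) hrest]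
    simp only [orbit, fibreComp, Function.comp_apply, hfirst]

theorem Disjunctive.exists_ge_block {Γ : Type*} {σ : ℕ → Γ} (hσ : Disjunctive σ) (N : ℕ)
    {m : ℕ} (w : Fin m → Γ) : ∃ j ≥ N, ∀ l : Fin m, σ (j + l) = w l := by
  obtain ⟨j, hj⟩ := hσ (N + m) (Fin.append (fun _ : Fin N => σ 0) w)
  refine ⟨j + N, Nat.le_add_left N j, fun l => ?_⟩
  rw [add_assoc, ← Fin.append_right (fun _ : Fin N => σ 0) w l, ← hj]
  rfl

theorem Disjunctive.exists_ge_orbit_add_eq_fibreComp {σ : ℕ → Λ} (hσ : Disjunctive σ)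
    (x₀ : X) (ρ : ℕ → Λ) (K N : ℕ) :
    ∃ j ≥ N, orbit f σ x₀ (j + K) = fibreComp f ρ K (orbit f σ x₀ j) := by
  obtain ⟨j, hjN, hj⟩ := hσ.exists_ge_block N fun l : Fin K => ρ (K - 1 - l)
  exact ⟨j, hjN, orbit_add_eq_fibreComp σ ρ x₀ K j fun i hi => hj ⟨i, hi⟩⟩

end Symbolic

section Topological

variable {X : Type*} [TopologicalSpace X] {Λ : Type*} {f : Λ → X → X}

theorem isCompact_iterate_hutch [Finite Λ] (hf : ∀ a, Continuous (f a)) {B : Set X}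
    (hB : IsCompact B) (k : ℕ) : IsCompact ((Hutch f)^[k] B) := by
  induction k with
  | zero => exact hB
  | succ k ih =>
    rw [Function.iterate_succ_apply']
    exact isCompact_iUnion fun a => ih.image (hf a)

theorem continuous_fibreComp (hf : ∀ a, Continuous (f a)) (ρ : ℕ → Λ) (K : ℕ) :
    Continuous (fibreComp f ρ K) := by
  induction K with
  | zero => exact continuous_id
  | succ K ih => exact ih.comp (hf (ρ K))

theorem exists_image_fibreComp_subset [T2Space X] (hf : ∀ a, Continuous (f a)) {A : Set X}
    (hAc : IsCompact A) (hA : Hutch f A ⊆ A) {ρ : ℕ → Λ} {U : Set X} (hU : IsOpen U)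
    (hρ : fibre f A ρ ⊆ U) : ∃ K, fibreComp f ρ K '' A ⊆ U := by
  have hcpt : ∀ K, IsCompact (fibreComp f ρ (K + 1) '' A) :=
    fun K => hAc.image (continuous_fibreComp hf ρ (K + 1))
  obtain ⟨K, hK⟩ := exists_subset_nhds_of_isCompact'
    ((antitone_image_fibreComp hA ρ).comp_monotone (add_left_mono (a := 1))).directed_ge hcpt
    (fun K => (hcpt K).isClosed) fun x hx => hU.mem_nhds (hρ hx)
  exact ⟨K + 1, hK⟩

end Topological

section Attractor

variable {X : Type*} [MetricSpace X] {Λ : Type*} [Finite Λ] [Nonempty Λ] {f : Λ → X → X}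
  {A : Set X} {x₀ : X}

theorem hausdorffEDist_iterate_hutch_ne_top (hf : ∀ a, Continuous (f a)) (hA : A.Nonempty)
    (hAc : IsCompact A) {B : Set X} (hB : B.Nonempty) (hBc : IsCompact B) (k : ℕ) :
    hausdorffEDist ((Hutch f)^[k] B) A ≠ ⊤ :=
  hausdorffEDist_ne_top_of_nonempty_of_bounded (nonempty_iterate_hutch hB k) hA
    (isCompact_iterate_hutch hf hBc k).isBounded hAc.isBounded

theorem IsAttractor.hutch_subset (hf : ∀ a, Continuous (f a)) (hA : IsAttractor f A) :
    Hutch f A ⊆ A := by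
  obtain ⟨hne, hcpt, U, -, hAU, hattr⟩ := hA
  have hfin := hausdorffEDist_iterate_hutch_ne_top hf hne hcpt hne hcpt
  have hlim := hattr A hne hcpt hAU
  rintro _ ⟨_, ⟨a, rfl⟩, x, hx, rfl⟩
  obtain ⟨z, hzS, hzx⟩ := exists_tendsto_of_tendsto_hausdorffDist hfin hlim hx
  -- `z k ∈ F^[k] A` tends to `x`, so `f a (z k) ∈ F^[k+1] A` tends to `f a x`
  refine mem_of_tendsto_of_tendsto_hausdorffDist hcpt.isClosed (fun k => hfin (k + 1))
    ((tendsto_add_atTop_iff_nat 1).2 hlim) (fun k => ?_) (((hf a).tendsto x).comp hzx)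
  rw [Function.iterate_succ_apply']
  exact mem_hutch a (hzS k)

theorem tendsto_infDist_orbit (hf : ∀ a, Continuous (f a)) (hA : IsAttractor f A)
    (hx₀ : x₀ ∈ basin f A) (σ : ℕ → Λ) :
    Tendsto (fun k => infDist (orbit f σ x₀ k) A) atTop (nhds 0) := by
  obtain ⟨U, ⟨-, -, hattr⟩, hx₀U⟩ := hx₀
  exact tendsto_infDist_of_tendsto_hausdorffDist
    (hausdorffEDist_iterate_hutch_ne_top hf hA.1 hA.2.1 (singleton_nonempty x₀)
      isCompact_singleton)
    (hattr {x₀} (singleton_nonempty x₀) isCompact_singleton (singleton_subset_iff.2 hx₀U))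
    (orbit_mem_iterate_hutch σ x₀)

theorem frequently_orbit_mem (hf : ∀ a, Continuous (f a)) (hA : IsAttractor f A)
    (hsf : StronglyFibred f A) (hx₀ : x₀ ∈ basin f A) {σ : ℕ → Λ} (hσ : Disjunctive σ)
    {U : Set X} (hU : IsOpen U) (hUA : (U ∩ A).Nonempty) :
    ∃ᶠ k in atTop, orbit f σ x₀ k ∈ U := by
  obtain ⟨ρ, hρ⟩ := hsf U hU hUA
  obtain ⟨K, hK⟩ := exists_image_fibreComp_subset hf hA.2.1 (hA.hutch_subset hf) hU hρ
  obtain ⟨δ, hδ, hthick⟩ := hA.2.1.exists_thickening_subset_open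
    ((continuous_fibreComp hf ρ K).isOpen_preimage U hU) (image_subset_iff.1 hK)
  obtain ⟨N, hN⟩ := eventually_atTop.1 <|
    (tendsto_order.1 (tendsto_infDist_orbit hf hA hx₀ σ)).2 δ hδ
  refine frequently_atTop.2 fun p => ?_
  obtain ⟨j, hj, hjK⟩ := hσ.exists_ge_orbit_add_eq_fibreComp x₀ ρ K (max N p)
  refine ⟨j + K, by omega, hjK ▸ hthick ?_⟩
  exact (mem_thickening_iff_infDist_lt hA.1).2 (hN j (le_of_max_le_left hj))

theorem subset_tailSet (hf : ∀ a, Continuous (f a)) (hA : IsAttractor f A)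
    (hsf : StronglyFibred f A) (hx₀ : x₀ ∈ basin f A) {σ : ℕ → Λ} (hσ : Disjunctive σ)
    (p : ℕ) :
    A ⊆ tailSet f σ x₀ p := by
  refine fun x hx => mem_closure_iff.2 fun U hU hxU => ?_
  obtain ⟨k, hk, hkU⟩ :=
    frequently_atTop.1 (frequently_orbit_mem hf hA hsf hx₀ hσ hU ⟨x, hxU, hx⟩) p
  exact ⟨_, hkU, k, hk, rfl⟩

theorem eventually_forall_mem_tailSet_infDist_le (hf : ∀ a, Continuous (f a))
    (hA : IsAttractor f A) (hx₀ : x₀ ∈ basin f A) (σ : ℕ → Λ) {ε : ℝ} (hε : 0 < ε) :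
    ∀ᶠ p in atTop, ∀ y ∈ tailSet f σ x₀ p, infDist y A ≤ ε := by
  obtain ⟨N, hN⟩ := eventually_atTop.1 <|
    (tendsto_order.1 (tendsto_infDist_orbit hf hA hx₀ σ)).2 ε hε
  filter_upwards [eventually_ge_atTop N] with p hp
  refine fun y hy => closure_minimal ?_ (isClosed_le (continuous_infDist_pt A) continuous_const) hy
  rintro _ ⟨k, hk, rfl⟩
  exact (hN k (hp.trans hk)).le

theorem Cinf_subset (hf : ∀ a, Continuous (f a)) (hA : IsAttractor f A)
    (hx₀ : x₀ ∈ basin f A) (σ : ℕ → Λ) : Cinf f σ x₀ ⊆ A := by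
  refine fun y hy => (hA.2.1.isClosed.mem_iff_infDist_zero hA.1).2 <|
    le_antisymm (le_of_forall_pos_le_add fun ε hε => ?_) infDist_nonneg
  obtain ⟨p, hp⟩ := (eventually_forall_mem_tailSet_infDist_le hf hA hx₀ σ hε).exists
  simpa using hp y (mem_iInter.1 hy p)

end Attractor

/-- Corollary 1: if `A` is a strongly-fibred attractor and `σ` is
disjunctive, then `C_∞(x₀,σ) = A`: the tails of the chaos game orbit converge to `A`
in the Hausdorff metric and `A = ⋂_p closure {x_n : n ≥ p}`. -/
theorem chaosGame_stronglyFibred_Cinf_eq_attractor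
    (f : Λ → X → X) (hf : ∀ a : Λ, Continuous (f a))
    (A : Set X) (hA : IsAttractor f A) (hsf : StronglyFibred f A)
    (x₀ : X) (hx₀ : x₀ ∈ basin f A)
    (σ : ℕ → Λ) (hσ : Disjunctive σ) :
    Cinf f σ x₀ = A ∧
    Tendsto (fun p : ℕ => hausdorffDist (tailSet f σ x₀ p) A) atTop (nhds 0) ∧
    A = ⋂ p : ℕ, tailSet f σ x₀ p := by
  have hsub : ∀ p, A ⊆ tailSet f σ x₀ p := subset_tailSet hf hA hsf hx₀ hσ
  have hCinf : Cinf f σ x₀ = A := (Cinf_subset hf hA hx₀ σ).antisymm (subset_iInter hsub)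
  refine ⟨hCinf, ?_, hCinf.symm⟩
  exact tendsto_hausdorffDist_of_forall_infDist_le hsub
    fun ε hε => eventually_forall_mem_tailSet_infDist_le hf hA hx₀ σ hε
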